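/- arXiv:1803.05064 — 5 statements merged into one kernel-verified Lean document; each statement's English description precedes it below -/
import Mathlib

section
/- If G is a group and H is a finitely generated subgroup of G such that every element of H has only finitely many conjugates in G, then the centralizer of H in G has finite index in G. -/
universe u

/-- The conjugacy class of `g` in `G`. -/
def conjClassSet {G : Type u} [Group G] (g : G) : Set G := {h | ∃ x : G, x * g * x⁻¹ = h}

/-! The centralizer of `H = closure S` is the intersection of the centralizers of the finitely
many generators in `S`. The centralizer of a single element `g` is its stabilizer under
conjugation, so by orbit–stabilizer its index is the size of the conjugacy class of `g`. -/

open MulAction Subgroup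

section

variable {G : Type u} [Group G]

lemma conjClassSet_eq_orbit (g : G) : conjClassSet g = orbit (ConjAct G) g := by
  ext y
  constructor
  · rintro ⟨x, rfl⟩
    exact ⟨ConjAct.toConjAct x, rfl⟩
  · rintro ⟨c, rfl⟩
    exact ⟨ConjAct.ofConjAct c, rfl⟩

lemma index_centralizer_singleton (g : G) :
    (centralizer {g}).index = (conjClassSet g).ncard := by
  rw [centralizer_eq_comap_stabilizer, conjClassSet_eq_orbit, ← index_stabilizer]
  exact index_comap_of_surjective _ ConjAct.toConjAct.surjective

lemma finiteIndex_centralizer_singleton {g : G} (hg : (conjClassSet g).Finite) :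
    (centralizer {g}).FiniteIndex :=
  ⟨by
    rw [index_centralizer_singleton]
    exact ((Set.ncard_pos hg).mpr ⟨g, 1, by simp⟩).ne'⟩

lemma finiteIndex_centralizer_of_finite {S : Set G} (hS : S.Finite)
    (hFC : ∀ g ∈ S, (conjClassSet g).Finite) : (centralizer S).FiniteIndex := by
  have := hS.to_subtype
  rw [centralizer_eq_iInf, iInf_subtype']
  exact finiteIndex_iInf fun g => finiteIndex_centralizer_singleton (hFC g g.2)

end

/-- If H is a finitely generated subgroup of G all of whose elements have finitely many
conjugates in G, then the centralizer of H has finite index in G. -/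
theorem fg_fc_subgroup_centralizer_finiteIndex (G : Type u) [Group G] (H : Subgroup G)
    (hfg : Group.FG H) (hFC : ∀ h ∈ H, (conjClassSet h).Finite) :
    (Subgroup.centralizer (H : Set G)).FiniteIndex := by
  obtain ⟨S, rfl, hS⟩ := (Subgroup.fg_iff H).mp ((Group.fg_iff_subgroup_fg H).mp hfg)
  rw [centralizer_closure]
  exact finiteIndex_centralizer_of_finite hS fun g hg => hFC g (subset_closure hg)
end

section
/- Let G be a group with hyper-FC center H. Then for every surjective homomorphism τ : G → J onto an ICC group J, H is contained in the kernel of τ. -/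
universe u

/-- An FC-element is one with a finite conjugacy class. -/
def IsFCElement {G : Type u} [Group G] (g : G) : Prop := (conjClassSet g).Finite

/-- A group is ICC if every nonidentity element has an infinite conjugacy class. -/
def IsICC (G : Type u) [Group G] : Prop := ∀ g : G, g ≠ 1 → (conjClassSet g).Infinite

/-- The FC-center of a group: the subgroup of elements with finite conjugacy class. -/
def FCCenter (G : Type u) [Group G] : Subgroup G where
  carrier := {g | IsFCElement g}
  one_mem' := Set.Finite.subset (Set.finite_singleton 1) (by rintro h ⟨x, rfl⟩; simp)
  mul_mem' := by
    intro a b ha hb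
    refine ((Set.Finite.image (fun p : G × G => p.1 * p.2) (ha.prod hb)).subset ?_)
    rintro h ⟨x, rfl⟩
    exact ⟨(x * a * x⁻¹, x * b * x⁻¹), ⟨⟨x, rfl⟩, ⟨x, rfl⟩⟩, by group⟩
  inv_mem' := by
    intro a ha
    refine (ha.image Inv.inv).subset ?_
    rintro h ⟨x, rfl⟩
    exact ⟨x * a * x⁻¹, ⟨x, rfl⟩, by group⟩

instance FCCenter_normal (G : Type u) [Group G] : (FCCenter G).Normal := by
  constructor
  intro n hn g
  refine Set.Finite.subset hn ?_
  rintro h ⟨x, rfl⟩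
  exact ⟨x * g, by group⟩

/-- One step of the upper FC-series: the preimage of the FC-center of the quotient. -/
noncomputable def fcStep {G : Type u} [Group G] (F : Subgroup G) : Subgroup G :=
  (FCCenter (G ⧸ Subgroup.normalClosure (F : Set G))).comap
    (QuotientGroup.mk' (Subgroup.normalClosure (F : Set G)))

instance fcStep_normal {G : Type u} [Group G] (F : Subgroup G) : (fcStep F).Normal :=
  Subgroup.Normal.comap inferInstance _

/-- The (transfinite) upper FC-series of `G`. -/
noncomputable def FCSeries (G : Type u) [Group G] (o : Ordinal.{u}) : Subgroup G :=
  Ordinal.limitRecOn o ⊥ (fun _ F => fcStep F)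
    (fun o _ ih => ⨆ a : {a : Ordinal.{u} // a < o}, ih a a.2)

lemma FCSeries_zero (G : Type u) [Group G] : FCSeries G 0 = ⊥ :=
  Ordinal.limitRecOn_zero ..

lemma FCSeries_succ (G : Type u) [Group G] (o : Ordinal.{u}) :
    FCSeries G (o + 1) = fcStep (FCSeries G o) :=
  Ordinal.limitRecOn_succ ..

lemma FCSeries_limit (G : Type u) [Group G] (o : Ordinal.{u}) (h : Order.IsSuccLimit o) :
    FCSeries G o = ⨆ a : {a : Ordinal.{u} // a < o}, FCSeries G a :=
  Ordinal.limitRecOn_limit _ _ _ _ h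

lemma normal_iSup {G : Type u} [Group G] {ι : Sort*} (f : ι → Subgroup G)
    (h : ∀ i, (f i).Normal) : (⨆ i, f i).Normal := by
  constructor
  intro n hn g
  have key : Subgroup.map (MulAut.conj g).toMonoidHom (⨆ i, f i) = ⨆ i, f i := by
    rw [Subgroup.map_iSup]
    refine iSup_congr fun i => ?_
    ext x
    constructor
    · rintro ⟨y, hy, rfl⟩
      exact (h i).conj_mem y hy g
    · intro hx
      exact ⟨g⁻¹ * x * g, by simpa using (h i).conj_mem x hx g⁻¹, by simp [MulAut.conj]; group⟩
  rw [← key]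
  exact ⟨n, hn, rfl⟩

instance FCSeries_normal (G : Type u) [Group G] (o : Ordinal.{u}) : (FCSeries G o).Normal := by
  induction o using Ordinal.limitRecOn with
  | zero => rw [FCSeries_zero]; infer_instance
  | add_one o ih => rw [FCSeries_succ]; infer_instance
  | limit o ho ih => rw [FCSeries_limit G o ho]; exact normal_iSup _ fun a => ih a a.2

/-- The hyper-FC center of `G`: the stabilized term of the upper FC-series. -/
noncomputable def hyperFCCenter (G : Type u) [Group G] : Subgroup G :=
  ⨆ o : Ordinal.{u}, FCSeries G o

instance hyperFCCenter_normal (G : Type u) [Group G] : (hyperFCCenter G).Normal :=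
  normal_iSup _ fun _ => inferInstance

/-- The finitely-indexed upper FC-series. -/
noncomputable def natFCSeries (G : Type u) [Group G] : ℕ → Subgroup G
  | 0 => ⊥
  | n + 1 => fcStep (natFCSeries G n)

theorem IsFCElement.map_of_surjective {G J : Type*} [Group G] [Group J] {φ : G →* J}
    (hφ : Function.Surjective φ) {g : G} (hg : IsFCElement g) : IsFCElement (φ g) := by
  refine (hg.image φ).subset ?_
  rintro _ ⟨x, rfl⟩
  obtain ⟨y, rfl⟩ := hφ x
  exact ⟨y * g * y⁻¹, ⟨y, rfl⟩, by simp only [map_mul, map_inv]⟩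

theorem FCCenter_eq_bot_of_isICC {J : Type*} [Group J] (hJ : IsICC J) : FCCenter J = ⊥ :=
  (Subgroup.eq_bot_iff_forall _).2 fun g hg => by_contra fun hg1 => hJ g hg1 hg

theorem FCCenter_le_ker_of_isICC {G J : Type*} [Group G] [Group J] {τ : G →* J}
    (hτ : Function.Surjective τ) (hJ : IsICC J) : FCCenter G ≤ τ.ker := fun g hg => by
  have hτg : τ g ∈ FCCenter J := hg.map_of_surjective hτ
  rwa [FCCenter_eq_bot_of_isICC hJ, Subgroup.mem_bot] at hτg

theorem fcStep_le_ker_of_isICC {G J : Type*} [Group G] [Group J] {τ : G →* J}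
    (hτ : Function.Surjective τ) (hJ : IsICC J) {F : Subgroup G} (hF : F ≤ τ.ker) :
    fcStep F ≤ τ.ker := by
  have hN : Subgroup.normalClosure (F : Set G) ≤ τ.ker := Subgroup.normalClosure_le_normal hF
  calc fcStep F
      ≤ (QuotientGroup.lift _ τ hN).ker.comap (QuotientGroup.mk' _) :=
        Subgroup.comap_mono <| FCCenter_le_ker_of_isICC
          (QuotientGroup.lift_surjective_of_surjective _ _ hτ hN) hJ
    _ = τ.ker := by rw [MonoidHom.comap_ker, QuotientGroup.lift_comp_mk']

theorem FCSeries_le_of_fcStep_le {G : Type u} [Group G] {K : Subgroup G}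
    (hK : ∀ F ≤ K, fcStep F ≤ K) (o : Ordinal.{u}) : FCSeries G o ≤ K := by
  induction o using Ordinal.limitRecOn with
  | zero => rw [FCSeries_zero]; exact bot_le
  | add_one o ih => rw [FCSeries_succ]; exact hK _ ih
  | limit o ho ih => rw [FCSeries_limit G o ho]; exact iSup_le fun a => ih a a.2

theorem hyperFCCenter_le_of_fcStep_le {G : Type u} [Group G] {K : Subgroup G}
    (hK : ∀ F ≤ K, fcStep F ≤ K) : hyperFCCenter G ≤ K :=
  iSup_le (FCSeries_le_of_fcStep_le hK)

/-- The hyper-FC center is contained in the kernel of every surjection onto an ICC group. -/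
theorem hyperFCCenter_le_ker_of_icc_quotient (G : Type u) [Group G]
    (J : Type u) [Group J] (τ : G →* J) (hτ : Function.Surjective τ) (hJ : IsICC J) :
    hyperFCCenter G ≤ τ.ker :=
  hyperFCCenter_le_of_fcStep_le fun _ hF => fcStep_le_ker_of_isICC hτ hJ hF
end

section
/- A group G has no nontrivial ICC quotient if and only if G equals its hyper-FC center (i.e., G is hyper-FC central). -/
universe u

/-
The hyper-FC center `H` is a fixed point of the FC-step, so `G ⧸ H` has trivial
FC-center, i.e. it is ICC, and it is nontrivial unless `H = G`. Conversely, an ICC quotient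
`τ : G → J` kills every term of the upper FC-series by transfinite induction: an element
that is FC modulo a subgroup already in `ker τ` maps to an FC-element of `J`, hence to `1`.
-/

/-- Choosing an index for each of the `u`-small many values of `f` gives a bounded set of
ordinals, and `f` at a bound dominates every value. -/
theorem Ordinal.exists_iSup_eq_of_monotone {α : Type u} [CompleteLattice α]
    {f : Ordinal.{u} → α} (hf : Monotone f) : ∃ o, ⨆ a, f a = f o := by
  obtain ⟨o, ho⟩ := Ordinal.bddAbove_of_small (s := Set.range (Set.rangeSplitting f))
  refine ⟨o, le_antisymm (iSup_le fun a => ?_) (le_iSup f o)⟩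
  calc f a = f (Set.rangeSplitting f ⟨f a, a, rfl⟩) :=
        (Set.apply_rangeSplitting f ⟨f a, a, rfl⟩).symm
    _ ≤ f o := hf (ho ⟨_, rfl⟩)

section FCSeries

variable {G : Type u} [Group G]

theorem IsFCElement.map {J : Type*} [Group J] {τ : G →* J} (hτ : Function.Surjective τ)
    {g : G} (hg : IsFCElement g) : IsFCElement (τ g) := by
  refine (hg.image τ).subset ?_
  rintro _ ⟨y, rfl⟩
  obtain ⟨x, rfl⟩ := hτ y
  exact ⟨x * g * x⁻¹, ⟨x, rfl⟩, by simp only [map_mul, map_inv]⟩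

theorem IsICC.eq_one_of_isFCElement {J : Type u} [Group J] (hJ : IsICC J) {g : J}
    (hg : IsFCElement g) : g = 1 :=
  by_contra fun h => hJ g h hg

theorem le_fcStep (F : Subgroup G) : F ≤ fcStep F := fun g hg => by
  show (g : G ⧸ Subgroup.normalClosure (F : Set G)) ∈ FCCenter _
  rw [(QuotientGroup.eq_one_iff g).mpr (Subgroup.le_normalClosure hg)]
  exact (FCCenter _).one_mem

theorem isICC_quotient_of_fcStep_le {F : Subgroup G} (h : fcStep F ≤ F) :
    IsICC (G ⧸ Subgroup.normalClosure (F : Set G)) := by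
  intro g hg hfin
  obtain ⟨x, rfl⟩ := QuotientGroup.mk'_surjective _ g
  exact hg ((QuotientGroup.eq_one_iff x).mpr (Subgroup.le_normalClosure (h hfin)))

theorem fcStep_le_ker {J : Type u} [Group J] {τ : G →* J} (hτ : Function.Surjective τ)
    (hJ : IsICC J) {F : Subgroup G} (hF : F ≤ τ.ker) : fcStep F ≤ τ.ker := by
  have hN : Subgroup.normalClosure (F : Set G) ≤ τ.ker := Subgroup.normalClosure_le_normal hF
  exact fun g hg => hJ.eq_one_of_isFCElement
    (IsFCElement.map (QuotientGroup.lift_surjective_of_surjective _ τ hτ hN) hg)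

variable (G) in
theorem FCSeries_mono : Monotone (FCSeries G) := by
  intro a b hab
  induction b using Ordinal.limitRecOn with
  | zero => rw [nonpos_iff_eq_zero.mp hab]
  | add_one b ih =>
    rcases hab.lt_or_eq with h | rfl
    · rw [FCSeries_succ]
      exact (ih (Order.lt_add_one_iff.mp h)).trans (le_fcStep _)
    · exact le_rfl
  | limit b hb ih =>
    rcases hab.lt_or_eq with h | rfl
    · rw [FCSeries_limit G b hb]
      exact le_iSup_of_le ⟨a, h⟩ le_rfl
    · exact le_rfl

theorem fcStep_hyperFCCenter_le : fcStep (hyperFCCenter G) ≤ hyperFCCenter G := by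
  obtain ⟨o, ho⟩ := Ordinal.exists_iSup_eq_of_monotone (FCSeries_mono G)
  calc fcStep (hyperFCCenter G) = FCSeries G (o + 1) := by
        rw [hyperFCCenter, ho, FCSeries_succ]
    _ ≤ hyperFCCenter G := le_iSup (FCSeries G) _

theorem hyperFCCenter_le_ker {J : Type u} [Group J] {τ : G →* J}
    (hτ : Function.Surjective τ) (hJ : IsICC J) : hyperFCCenter G ≤ τ.ker := by
  refine iSup_le fun o => ?_
  induction o using Ordinal.limitRecOn with
  | zero => exact (FCSeries_zero G).trans_le bot_le
  | add_one o ih => exact (FCSeries_succ G o).trans_le (fcStep_le_ker hτ hJ ih)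
  | limit o ho ih => exact (FCSeries_limit G o ho).trans_le (iSup_le fun a => ih a a.2)

end FCSeries

/-- G has no nontrivial ICC quotient iff G equals its hyper-FC center. -/
theorem no_nontrivial_icc_quotient_iff_hyperFC_central (G : Type u) [Group G] :
    (¬ ∃ (J : Type u) (_ : Group J) (τ : G →* J),
        Function.Surjective τ ∧ IsICC J ∧ Nontrivial J) ↔
      hyperFCCenter G = ⊤ := by
  constructor
  · refine fun hno => by_contra fun hne => hno ?_
    refine ⟨G ⧸ Subgroup.normalClosure (hyperFCCenter G : Set G), inferInstance,
      QuotientGroup.mk' _, QuotientGroup.mk'_surjective _,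
      isICC_quotient_of_fcStep_le fcStep_hyperFCCenter_le, ?_⟩
    rw [Subgroup.normalClosure_eq_self]
    exact QuotientGroup.nontrivial_iff.mpr hne
  · rintro htop ⟨J, _, τ, hτ, hJ, _⟩
    obtain ⟨j, hj⟩ := exists_ne (1 : J)
    obtain ⟨x, rfl⟩ := hτ j
    exact hj (hyperFCCenter_le_ker hτ hJ (htop ▸ Subgroup.mem_top x))
end

section
/- Let N be a finitely generated group and let Γ be the last nontrivial term of its lower central series considered (i.e., Γ = γ_{m-1}(N) where N/F is nilpotent of class at most m−1 for some FC subgroup F). If every element of Γ has a finite conjugacy class in N, then Γ is finitely generated. -/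
/-!
Inductively, `γ_{k+1}(N) = ⁅γ_k(N), N⁆` is the normal closure of the commutators `⁅t, s⁆` of the
normal generators `t` of `γ_k(N)` with the generators `s` of `N`, so every term of the lower
central series of a finitely generated group is the normal closure of a finite set `T`. That normal
closure is generated by the conjugates of the elements of `T`, which form a finite set once each
element of `T` has finitely many conjugates.
-/

universe u

open scoped commutatorElement

theorem conjClassSet_eq_conjugatesOf {G : Type u} [Group G] (g : G) :
    conjClassSet g = conjugatesOf g :=
  Set.ext fun _ => isConj_iff.symm

namespace Subgroup

variable {G : Type*} [Group G]

theorem mem_center_iff_forall_mul_comm_of_closure_eq_top {S : Set G} (hS : closure S = ⊤)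
    {g : G} : g ∈ center G ↔ ∀ s ∈ S, s * g = g * s := by
  rw [← centralizer_univ, ← coe_top, ← hS, centralizer_closure, mem_centralizer_iff]

theorem commutator_normalClosure_top {S : Set G} (hS : closure S = ⊤) (T : Set G) :
    ⁅normalClosure T, ⊤⁆ = normalClosure (Set.image2 (⁅·, ·⁆) T S) := by
  set K := normalClosure (Set.image2 (⁅·, ·⁆) T S)
  refine le_antisymm ?_ ?_
  · have hS' : closure (QuotientGroup.mk' K '' S) = ⊤ := by
      rw [← MonoidHom.map_closure, hS, map_top_of_surjective _ (QuotientGroup.mk'_surjective K)]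
    -- Modulo `K` each `t ∈ T` commutes with the generators, hence is central.
    have hT : T ⊆ comap (QuotientGroup.mk' K) (center (G ⧸ K)) := by
      intro t ht
      rw [SetLike.mem_coe, mem_comap, mem_center_iff_forall_mul_comm_of_closure_eq_top hS',
        Set.forall_mem_image]
      intro s hs
      have hts : QuotientGroup.mk' K ⁅t, s⁆ = 1 :=
        (QuotientGroup.eq_one_iff _).mpr (subset_normalClosure (Set.mem_image2_of_mem ht hs))
      rw [map_commutatorElement, commutatorElement_eq_one_iff_mul_comm] at hts
      exact hts.symm
    have hle : normalClosure T ≤ upperCentralSeriesStep K := by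
      rw [upperCentralSeriesStep_eq_comap_center]
      exact normalClosure_le_normal hT
    exact commutator_le.mpr fun g hg y _ => hle hg y
  · refine normalClosure_le_normal (Set.image2_subset_iff.mpr fun t ht s _ => ?_)
    exact commutator_mem_commutator (subset_normalClosure ht) (mem_top s)

theorem exists_finite_normalClosure_eq_lowerCentralSeries (hG : Group.FG G) (k : ℕ) :
    ∃ T : Set G, T.Finite ∧ normalClosure T = (⊤ : Subgroup G).lowerCentralSeries k := by
  obtain ⟨S, hS, hSfin⟩ := Group.fg_iff.mp hG
  induction k with
  | zero => exact ⟨S, hSfin, top_unique (hS ▸ closure_le_normalClosure)⟩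
  | succ k ih =>
    obtain ⟨T, hTfin, hT⟩ := ih
    refine ⟨Set.image2 (⁅·, ·⁆) T S, hTfin.image2 _ hSfin, ?_⟩
    rw [lowerCentralSeries_succ, ← hT, commutator_normalClosure_top hS]

theorem normalClosure_fg_of_finite {T : Set G} (hT : T.Finite)
    (hfc : ∀ t ∈ T, (conjugatesOf t).Finite) : (normalClosure T).FG :=
  (fg_iff _).mpr ⟨Group.conjugatesOfSet T, rfl, hT.biUnion hfc⟩

end Subgroup

/-- If N is finitely generated and every element of the term γ_k(N) of the lower central
series has a finite conjugacy class in N, then γ_k(N) is finitely generated. -/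
theorem lowerCentralSeries_fg_of_fc (N : Type u) [Group N] (hfg : Group.FG N) (k : ℕ)
    (h : ∀ g ∈ (⊤ : Subgroup N).lowerCentralSeries k, (conjClassSet g).Finite) :
    Group.FG ((⊤ : Subgroup N).lowerCentralSeries k) := by
  obtain ⟨T, hTfin, hT⟩ := Subgroup.exists_finite_normalClosure_eq_lowerCentralSeries hfg k
  rw [Group.fg_iff_subgroup_fg, ← hT]
  refine Subgroup.normalClosure_fg_of_finite hTfin fun t ht => ?_
  rw [← conjClassSet_eq_conjugatesOf]
  exact h t (hT ▸ Subgroup.subset_normalClosure ht)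
end

section
/- A finitely generated group G is virtually nilpotent if and only if G has no nontrivial ICC quotient. -/
universe u

/-!
Quotients of virtually nilpotent groups are virtually nilpotent, and a nontrivial virtually
nilpotent group `J` has a nontrivial element with finitely many conjugates: any one if `J` is
finite, and otherwise a nontrivial central element of a nilpotent finite-index subgroup `N`,
since it is centralized by `N`.

Conversely, iterate the FC-centre transfinitely: `fcSeries G o` is generated by the elements with
finitely many conjugates modulo some earlier term. The series stabilizes at a normal subgroup `F`
with `G ⧸ F` ICC, so without nontrivial ICC quotients `F = G`. One then shows by induction on `o`
that `γₖ(G) ≤ fcSeries G o` forces `G` to be virtually nilpotent. The term `γₖ(G)` is the normal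
closure of finitely many elements, which are all FC modulo a single earlier term `N`; the
centralizer of their normal closure modulo `N` pulls back to a finite-index subgroup `H` with
`γₖ₊₁(H) ≤ ⁅γₖ(G), H⁆ ≤ N`. Since `N ∩ H` lies in the corresponding term of the series of `H`,
and `H` is finitely generated by Schreier's lemma, the induction hypothesis applies to `H`.
-/

open Subgroup Group

section FCCenter

variable {Q : Type*} [Group Q]

lemma conjClassSet_eq_conjugatesOf_s18 (g : Q) : conjClassSet g = conjugatesOf g :=
  Set.ext fun _ => isConj_iff.symm

lemma index_centralizer_eq_ncard_conjClassSet (g : Q) :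
    (centralizer {g}).index = (conjClassSet g).ncard := by
  have horbit : MulAction.orbit (ConjAct Q) g = conjClassSet g := by
    ext h
    rw [ConjAct.mem_orbit_conjAct, conjClassSet_eq_conjugatesOf_s18, isConj_comm]
    rfl
  rw [centralizer_eq_comap_stabilizer, ← horbit, ← MulAction.index_stabilizer]
  exact index_comap_of_surjective _ ConjAct.toConjAct.surjective

lemma finite_conjClassSet_iff_finiteIndex (g : Q) :
    (conjClassSet g).Finite ↔ (centralizer {g}).FiniteIndex := by
  rw [finiteIndex_iff, index_centralizer_eq_ncard_conjClassSet]
  exact ⟨fun h => (Set.ncard_pos h).2 ⟨g, 1, by group⟩ |>.ne', Set.finite_of_ncard_ne_zero⟩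

variable (Q) in
def fcCenter : Subgroup Q where
  carrier := {g | (conjClassSet g).Finite}
  one_mem' := (Set.finite_singleton 1).subset fun _ ⟨x, hx⟩ => by simp [← hx]
  mul_mem' {a b} ha hb := (ha.image2 (· * ·) hb).subset fun _ ⟨x, hx⟩ =>
    ⟨_, ⟨x, rfl⟩, _, ⟨x, rfl⟩, by rw [← hx]; group⟩
  inv_mem' {a} ha := ha.inv.subset fun _ ⟨x, hx⟩ => ⟨x, by rw [← hx]; group⟩

lemma mem_fcCenter {g : Q} : g ∈ fcCenter Q ↔ (conjClassSet g).Finite := Iff.rfl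

lemma conjClassSet_conj (g y : Q) : conjClassSet (y * g * y⁻¹) = conjClassSet g := by
  simp only [conjClassSet_eq_conjugatesOf_s18]
  exact (isConj_iff.2 ⟨y, rfl⟩).conjugatesOf_eq.symm

instance : (fcCenter Q).Normal :=
  ⟨fun g hg y => by rwa [mem_fcCenter, conjClassSet_conj]⟩

lemma isICC_iff_fcCenter_eq_bot : IsICC Q ↔ fcCenter Q = ⊥ := by
  simp only [IsICC, eq_bot_iff, SetLike.le_def, mem_fcCenter, mem_bot, Set.Infinite]
  exact forall_congr' fun g => not_imp_not

lemma comap_fcCenter_le {P : Type*} [Group P] {f : P →* Q} (hf : Function.Injective f) :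
    (fcCenter Q).comap f ≤ fcCenter P := fun g hg =>
  (hg.preimage hf.injOn).subset fun _ ⟨x, hx⟩ => ⟨f x, by simp [← hx]⟩

lemma finiteIndex_centralizer_of_subset_fcCenter {T : Set Q} (hT : T.Finite)
    (hTfc : T ⊆ fcCenter Q) : (centralizer T).FiniteIndex := by
  rw [centralizer_eq_iInf, ← hT.coe_toFinset]
  exact finiteIndex_iInf' _ fun t ht =>
    (finite_conjClassSet_iff_finiteIndex t).1 (hTfc (hT.mem_toFinset.1 ht))

lemma finiteIndex_centralizer_normalClosure {D : Set Q} (hD : D.Finite)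
    (hDfc : D ⊆ fcCenter Q) : (centralizer (normalClosure D : Set Q)).FiniteIndex := by
  rw [normalClosure, centralizer_closure]
  refine finiteIndex_centralizer_of_subset_fcCenter ?_ (conjugatesOfSet_subset hDfc)
  exact hD.biUnion fun d hd => conjClassSet_eq_conjugatesOf_s18 d ▸ hDfc hd

lemma fcCenter_ne_bot_of_isVirtuallyNilpotent [Nontrivial Q] (h : IsVirtuallyNilpotent Q) :
    fcCenter Q ≠ ⊥ := by
  suffices ∃ g ∈ fcCenter Q, g ≠ 1 by
    obtain ⟨g, hg, hg1⟩ := this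
    exact fun h => hg1 (by simpa [h] using hg)
  obtain ⟨N, hN, hNfi⟩ := h
  rcases subsingleton_or_nontrivial N with hN1 | hN1
  · have : Finite Q := by
      rw [N.eq_bot_of_subsingleton] at hNfi
      exact Nat.finite_of_card_ne_zero (index_bot (G := Q) ▸ hNfi.index_ne_zero)
    obtain ⟨g, hg⟩ := exists_ne (1 : Q)
    exact ⟨g, Set.toFinite _, hg⟩
  · obtain ⟨z, hz, hz1⟩ := (bot_or_exists_ne_one _).resolve_left hN.center_ne_bot
    have hNz : N ≤ centralizer {(z : Q)} := fun n hn => by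
      simpa [mem_centralizer_singleton_iff] using congrArg Subtype.val (mem_center_iff.1 hz ⟨n, hn⟩)
    have := finiteIndex_of_le hNz
    exact ⟨z, (finite_conjClassSet_iff_finiteIndex _).2 this, by simpa using hz1⟩

end FCCenter

namespace Group.IsVirtuallyNilpotent

variable {G : Type*} [Group G]

lemma of_surjective {P : Type*} [Group P] (h : IsVirtuallyNilpotent G) {f : G →* P}
    (hf : Function.Surjective f) : IsVirtuallyNilpotent P := by
  obtain ⟨N, hN, hNfi⟩ := h
  refine ⟨N.map f, nilpotent_of_surjective _ (f.subgroupMap_surjective N), ⟨?_⟩⟩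
  exact ne_zero_of_dvd_ne_zero hNfi.index_ne_zero (index_map_dvd N hf)

lemma of_finiteIndex_subgroup {H : Subgroup G} [H.FiniteIndex] (h : IsVirtuallyNilpotent H) :
    IsVirtuallyNilpotent G := by
  obtain ⟨K, hK, hKfi⟩ := h
  refine ⟨K.map H.subtype, ?_, ⟨?_⟩⟩
  · exact (isNilpotent_congr (K.equivMapOfInjective _ H.subtype_injective)).1 hK
  · rw [index_map_subtype]
    exact mul_ne_zero hKfi.index_ne_zero FiniteIndex.index_ne_zero

end Group.IsVirtuallyNilpotent

section RelativeFC

variable {G : Type*} [Group G]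

-- Phrased with the coset space `G ⧸ N`, so that it makes sense for every subgroup `N`: the
-- recursion defining `fcSeries` cannot know yet that its terms are normal.
def fcSet (N : Subgroup G) : Set G :=
  {g | (Set.range fun x : G => ((x * g * x⁻¹ : G) : G ⧸ N)).Finite}

lemma mem_fcSet_iff {N : Subgroup G} [N.Normal] {g : G} :
    g ∈ fcSet N ↔ (g : G ⧸ N) ∈ fcCenter (G ⧸ N) := by
  suffices (Set.range fun x : G => ((x * g * x⁻¹ : G) : G ⧸ N)) = conjClassSet (g : G ⧸ N) by
    rw [fcSet, Set.mem_ofPred_eq, this, mem_fcCenter]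
  ext q
  constructor
  · rintro ⟨x, rfl⟩
    exact ⟨x, rfl⟩
  · rintro ⟨y, rfl⟩
    obtain ⟨x, rfl⟩ := QuotientGroup.mk_surjective y
    exact ⟨x, rfl⟩

lemma coe_comap_fcCenter {N : Subgroup G} [N.Normal] :
    ((fcCenter (G ⧸ N)).comap (QuotientGroup.mk' N) : Set G) = fcSet N :=
  Set.ext fun _ => mem_fcSet_iff.symm

lemma fcSet_mono {N M : Subgroup G} (h : N ≤ M) : fcSet N ⊆ fcSet M := fun g hg => by
  refine (Set.Finite.image (quotientMapOfLE h) hg).subset ?_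
  rintro _ ⟨x, rfl⟩
  exact ⟨_, ⟨x, rfl⟩, rfl⟩

lemma fcSet_subgroupOf {N : Subgroup G} [N.Normal] (H : Subgroup G) {x : H}
    (hx : (x : G) ∈ fcSet N) : x ∈ fcSet (N.subgroupOf H) := by
  have hf : Function.Injective (QuotientGroup.map (N.subgroupOf H) N H.subtype fun _ h => h) := by
    rw [← MonoidHom.ker_eq_bot_iff]
    exact (QuotientGroup.ker_map _ _ _ _).trans (QuotientGroup.map_mk'_self _)
  rw [mem_fcSet_iff] at hx ⊢
  exact comap_fcCenter_le hf hx

lemma isICC_quotient_of_fcSet_subset {F : Subgroup G} [F.Normal] (hF : fcSet F ⊆ F) :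
    IsICC (G ⧸ F) := by
  rw [isICC_iff_fcCenter_eq_bot, eq_bot_iff]
  intro q hq
  obtain ⟨g, rfl⟩ := QuotientGroup.mk_surjective q
  rw [mem_bot, QuotientGroup.eq_one_iff]
  exact hF (mem_fcSet_iff.2 hq)

lemma exists_finiteIndex_commutator_normalClosure_le {N : Subgroup G} [N.Normal] {D : Set G}
    (hD : D.Finite) (hDfc : D ⊆ fcSet N) :
    ∃ H : Subgroup G, H.FiniteIndex ∧ ⁅normalClosure D, H⁆ ≤ N := by
  let π := QuotientGroup.mk' N
  have hπD : π '' D ⊆ fcCenter (G ⧸ N) := by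
    rintro _ ⟨d, hd, rfl⟩
    exact mem_fcSet_iff.1 (hDfc hd)
  have := finiteIndex_centralizer_normalClosure (hD.image π) hπD
  refine ⟨(centralizer (normalClosure (π '' D) : Set (G ⧸ N))).comap π, ⟨?_⟩, ?_⟩
  · rw [index_comap_of_surjective _ (QuotientGroup.mk'_surjective N)]
    exact FiniteIndex.index_ne_zero
  · rw [commutator_le]
    intro a ha h hh
    rw [← QuotientGroup.ker_mk' N, MonoidHom.mem_ker, map_commutatorElement,
      commutatorElement_eq_one_iff_commute]
    have : π a ∈ normalClosure (π '' D) :=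
      map_normalClosure D π (QuotientGroup.mk'_surjective N) ▸ mem_map_of_mem π ha
    exact mem_centralizer_iff.1 hh _ this

end RelativeFC

section LowerCentralSeries

open scoped commutatorElement

variable {G : Type*} [Group G]

lemma commutator_normalClosure_top_le {S X : Set G} (hX : closure X = ⊤) :
    ⁅normalClosure S, ⊤⁆ ≤ normalClosure (Set.image2 (⁅·, ·⁆) S X) := by
  set M := normalClosure (Set.image2 (⁅·, ·⁆) S X)
  let π := QuotientGroup.mk' M
  suffices S ⊆ (center (G ⧸ M)).comap π by
    rw [commutator_le]
    intro a ha g _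
    rw [← QuotientGroup.ker_mk' M, MonoidHom.mem_ker, map_commutatorElement,
      commutatorElement_eq_one_iff_commute]
    exact (mem_center_iff.1 (normalClosure_le_normal this ha) (π g)).symm
  intro s hs
  have hcomm : ∀ x ∈ X, Commute (π s) (π x) := fun x hx => by
    have : ⁅s, x⁆ ∈ M := subset_normalClosure (Set.mem_image2_of_mem hs hx)
    rwa [← QuotientGroup.ker_mk' M, MonoidHom.mem_ker, map_commutatorElement,
      commutatorElement_eq_one_iff_commute] at this
  have hcentral : closure X ≤ (centralizer {π s}).comap π :=
    (closure_le _).2 fun x hx => mem_centralizer_singleton_iff.2 (hcomm x hx).symm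
  rw [hX] at hcentral
  refine mem_center_iff.2 fun q => ?_
  obtain ⟨g, rfl⟩ := QuotientGroup.mk'_surjective M q
  exact mem_centralizer_singleton_iff.1 (hcentral (mem_top g))

lemma exists_finite_normalClosure_eq_lowerCentralSeries [FG G] (k : ℕ) :
    ∃ D : Set G, D.Finite ∧ normalClosure D = (⊤ : Subgroup G).lowerCentralSeries k := by
  obtain ⟨X, hX, hXfin⟩ := fg_iff.1 ‹FG G›
  induction k with
  | zero => exact ⟨X, hXfin, le_antisymm le_top (hX ▸ closure_le_normalClosure)⟩
  | succ k ih =>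
    obtain ⟨D, hD, hDk⟩ := ih
    refine ⟨Set.image2 (⁅·, ·⁆) D X, hD.image2 _ hXfin, le_antisymm ?_ ?_⟩
    · exact normalClosure_le_normal (Set.image2_subset_iff.2 fun d hd x _ =>
        commutator_mem_commutator (hDk ▸ subset_normalClosure hd) (mem_top x))
    · rw [Subgroup.lowerCentralSeries_succ, ← hDk]
      exact commutator_normalClosure_top_le hX

end LowerCentralSeries

section FCSeries

variable (G : Type u) [Group G]

noncomputable def fcSeries (o : Ordinal.{u}) : Subgroup G :=
  normalClosure (⋃ γ : Set.Iio o, fcSet (fcSeries γ))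
termination_by o
decreasing_by exact γ.2

instance (o : Ordinal.{u}) : (fcSeries G o).Normal := by
  rw [fcSeries.eq_1 G o]
  infer_instance

variable {G}

lemma fcSet_fcSeries_subset {γ o : Ordinal.{u}} (h : γ < o) :
    fcSet (fcSeries G γ) ⊆ fcSeries G o := by
  rw [fcSeries.eq_1 G o]
  exact (Set.subset_iUnion (fun γ : Set.Iio o => fcSet (fcSeries G γ)) ⟨γ, h⟩).trans
    subset_normalClosure

lemma fcSeries_mono : Monotone (fcSeries G) := fun o o' h => by
  rw [fcSeries.eq_1 G o, fcSeries.eq_1 G o']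
  exact normalClosure_mono <| Set.iUnion_subset fun γ =>
    Set.subset_iUnion (fun γ : Set.Iio o' => fcSet (fcSeries G γ)) ⟨γ, γ.2.trans_le h⟩

lemma fcSeries_zero : fcSeries G 0 = ⊥ := by
  rw [fcSeries, Set.iUnion_of_empty, normalClosure_empty]

-- For `o ≠ 0` the union defining `fcSeries G o` is directed, hence already a normal subgroup.
lemma mem_fcSeries {o : Ordinal.{u}} (ho : o ≠ 0) {x : G} :
    x ∈ fcSeries G o ↔ ∃ γ < o, x ∈ fcSet (fcSeries G γ) := by
  let S : Set.Iio o → Subgroup G := fun γ =>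
    (fcCenter (G ⧸ fcSeries G γ)).comap (QuotientGroup.mk' _)
  have hS : ∀ γ, (S γ : Set G) = fcSet (fcSeries G γ) := fun γ => coe_comap_fcCenter
  have hdir : Directed (· ≤ ·) S := Monotone.directed_le fun γ γ' h => by
    rw [← SetLike.coe_subset_coe, hS, hS]
    exact fcSet_mono (fcSeries_mono h)
  have : Nonempty (Set.Iio o) := ⟨⟨0, pos_iff_ne_zero.2 ho⟩⟩
  have : fcSeries G o = ⨆ γ, S γ := by
    rw [fcSeries, ← normalClosure_eq_self (⨆ γ, S γ), coe_iSup_of_directed hdir]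
    simp_rw [hS]
  rw [this, mem_iSup_of_directed hdir]
  simp [← SetLike.mem_coe, hS]

lemma exists_lt_subset_fcSet_fcSeries {o : Ordinal.{u}} (ho : o ≠ 0) {D : Set G}
    (hD : D.Finite) (hDo : D ⊆ fcSeries G o) : ∃ γ < o, D ⊆ fcSet (fcSeries G γ) := by
  have : ∀ d ∈ D, ∃ γ < o, d ∈ fcSet (fcSeries G γ) := fun d hd => (mem_fcSeries ho).1 (hDo hd)
  choose! γ hγo hγ using this
  refine ⟨hD.toFinset.sup γ, (Finset.sup_lt_iff (pos_iff_ne_zero.2 ho)).2 fun d hd =>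
    hγo d (hD.mem_toFinset.1 hd), fun d hd => ?_⟩
  exact fcSet_mono (fcSeries_mono (Finset.le_sup (hD.mem_toFinset.2 hd))) (hγ d hd)

variable (G) in
lemma exists_fcSet_fcSeries_subset : ∃ o : Ordinal.{u}, fcSet (fcSeries G o) ⊆ fcSeries G o := by
  by_contra! h
  -- otherwise `fcSeries G` would embed `Ordinal.{u}` into the small type `Subgroup G`
  have : StrictMono (fcSeries G) := fun o o' hlt =>
    (fcSeries_mono hlt.le).lt_of_ne fun heq => h o ((fcSet_fcSeries_subset hlt).trans heq.ge)
  exact not_small_ordinal.{u, u} (small_of_injective this.injective)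

lemma subgroupOf_fcSeries_le (H : Subgroup G) (o : Ordinal.{u}) :
    (fcSeries G o).subgroupOf H ≤ fcSeries H o := by
  induction o using WellFoundedLT.induction with
  | _ o ih =>
  rcases eq_or_ne o 0 with rfl | ho
  · rw [fcSeries_zero, bot_subgroupOf]
    exact bot_le
  intro x hx
  obtain ⟨γ, hγ, hxγ⟩ := (mem_fcSeries ho).1 (mem_subgroupOf.1 hx)
  exact fcSet_fcSeries_subset hγ (fcSet_mono (ih γ hγ) (fcSet_subgroupOf H hxγ))

end FCSeries

theorem isVirtuallyNilpotent_of_lowerCentralSeries_le_fcSeries (o : Ordinal.{u}) :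
    ∀ (G : Type u) [Group G] [FG G] (k : ℕ),
      (⊤ : Subgroup G).lowerCentralSeries k ≤ fcSeries G o → IsVirtuallyNilpotent G := by
  induction o using WellFoundedLT.induction with
  | _ o ih =>
  intro G _ _ k hk
  rcases eq_or_ne o 0 with rfl | ho
  · rw [fcSeries_zero, le_bot_iff] at hk
    exact (Subgroup.nilpotent_iff_lowerCentralSeries.2 ⟨k, hk⟩).isVirtuallyNilpotent
  obtain ⟨D, hD, hDk⟩ := exists_finite_normalClosure_eq_lowerCentralSeries (G := G) k
  obtain ⟨γ, hγ, hDγ⟩ :=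
    exists_lt_subset_fcSet_fcSeries ho hD (subset_normalClosure.trans (hDk ▸ hk))
  obtain ⟨H, hH, hDH⟩ := exists_finiteIndex_commutator_normalClosure_le hD hDγ
  have hHk : (⊤ : Subgroup H).lowerCentralSeries (k + 1) ≤ fcSeries H γ := by
    refine le_trans ?_ (subgroupOf_fcSeries_le H γ)
    rw [subgroupOf, ← map_le_iff_le_comap, top_subtype_lowerCentralSeries,
      Subgroup.lowerCentralSeries_succ]
    exact le_trans (commutator_mono (hDk ▸ lowerCentralSeries_mono k le_top) le_rfl) hDH
  exact (ih γ hγ H (k + 1) hHk).of_finiteIndex_subgroup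

/-- A finitely generated group is virtually nilpotent iff it has no nontrivial ICC
quotient. -/
theorem fg_virtually_nilpotent_iff_no_icc_quotient (G : Type u) [Group G]
    (hfg : Group.FG G) :
    (∃ N : Subgroup G, N.FiniteIndex ∧ Group.IsNilpotent N) ↔
      ¬ ∃ (J : Type u) (_ : Group J) (τ : G →* J),
          Function.Surjective τ ∧ IsICC J ∧ Nontrivial J := by
  rw [show (∃ N : Subgroup G, N.FiniteIndex ∧ IsNilpotent N) ↔ IsVirtuallyNilpotent G from
    exists_congr fun _ => and_comm]
  constructor
  · rintro hG ⟨J, _, τ, hτ, hJ, _⟩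
    exact fcCenter_ne_bot_of_isVirtuallyNilpotent (hG.of_surjective hτ)
      (isICC_iff_fcCenter_eq_bot.1 hJ)
  · intro hno
    by_contra hG
    obtain ⟨o, ho⟩ := exists_fcSet_fcSeries_subset G
    have htop : fcSeries G o ≠ ⊤ := fun h =>
      hG (isVirtuallyNilpotent_of_lowerCentralSeries_le_fcSeries o G 0 (h ▸ le_rfl))
    exact hno ⟨G ⧸ fcSeries G o, inferInstance, QuotientGroup.mk' _,
      QuotientGroup.mk'_surjective _, isICC_quotient_of_fcSet_subset ho,
      QuotientGroup.nontrivial_iff.2 htop⟩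
end
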